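/- Let t ∈ (0,∞) and let Λ be a microscopic configuration. Then the infimum over all macroscopic configurations α of I(Λ,α;t) equals I(Λ, δ_{1−c_Λ}; t), which equals I_Mi(Λ;t) + (1−c_Λ) log( (1−c_Λ)/(1 − e^{−t(1−c_Λ)}) ) + (t/2)(1−c_Λ)c_Λ (with the convention that the last two summands are 0 when c_Λ = 1). -/

import Mathlib

open scoped BigOperators Classical

namespace ERGraph

/-- A microscopic configuration: `Λ = (λ_k)_{k ≥ 1} ∈ [0,∞)^ℕ` with `c_Λ = ∑ k λ_k ≤ 1`. -/
structure MicroConfig where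
  lam : ℕ+ → ℝ
  nonneg : ∀ k, 0 ≤ lam k
  summable' : Summable fun k : ℕ+ => ((k : ℕ) : ℝ) * lam k
  mass_le : (∑' k : ℕ+, ((k : ℕ) : ℝ) * lam k) ≤ 1

/-- A macroscopic configuration: a nonincreasing sequence in `[0,1]` with sum ≤ 1.
(`a i` represents `α_{i+1}`.) -/
structure MacroConfig where
  a : ℕ → ℝ
  antitone : Antitone a
  nonneg : ∀ i, 0 ≤ a i
  le_one : ∀ i, a i ≤ 1
  summable' : Summable a
  mass_le : (∑' i, a i) ≤ 1

noncomputable def cMi (Λ : MicroConfig) : ℝ := ∑' k : ℕ+, ((k : ℕ) : ℝ) * Λ.lam k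

noncomputable def cMa (α : MacroConfig) : ℝ := ∑' i, α.a i

lemma cMi_nonneg (Λ : MicroConfig) : 0 ≤ cMi Λ :=
  tsum_nonneg fun k => mul_nonneg (by positivity) (Λ.nonneg k)

lemma cMi_le_one (Λ : MicroConfig) : cMi Λ ≤ 1 := Λ.mass_le

lemma cMa_nonneg (α : MacroConfig) : 0 ≤ cMa α := tsum_nonneg α.nonneg

lemma cMa_le_one (α : MacroConfig) : cMa α ≤ 1 := α.mass_le

/-- summand of `I_Mi`:  `λ_k log(k! t λ_k / (e k^{k-2}))`. -/
noncomputable def miTerm (t x : ℝ) (k : ℕ+) : ℝ :=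
  x * Real.log (((k : ℕ).factorial : ℝ) * t * x /
      (Real.exp 1 * ((k : ℕ) : ℝ) ^ (((k : ℕ) : ℤ) - 2)))

/-- `I_Mi(Λ;t)`, as an extended real number (`⊤` if the series diverges). -/
noncomputable def IMi (t : ℝ) (Λ : MicroConfig) : EReal :=
  if Summable (fun k : ℕ+ => miTerm t (Λ.lam k) k)
  then (((∑' k : ℕ+, miTerm t (Λ.lam k) k) + cMi Λ * (1 + t / 2 - Real.log t) : ℝ) : EReal)
  else ⊤

/-- summand of `I_Ma`: `x log(x/(1-e^{-tx})) + (t/2) x (1-x)`. -/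
noncomputable def maTerm (t x : ℝ) : ℝ :=
  x * Real.log (x / (1 - Real.exp (-(t * x)))) + t / 2 * x * (1 - x)

/-- `I_Ma(α;t)` (always a finite real number). -/
noncomputable def IMa (t : ℝ) (α : MacroConfig) : ℝ := ∑' i, maTerm t (α.a i)

/-- The large-deviations rate function `I(Λ,α;t)`. -/
noncomputable def Irate (t : ℝ) (Λ : MicroConfig) (α : MacroConfig) : EReal :=
  if cMi Λ + cMa α ≤ 1
  then IMi t Λ + ((IMa t α + (1 - cMi Λ - cMa α) * (t / 2 - Real.log t) : ℝ) : EReal)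
  else ⊤

/-- The macroscopic configuration `δ_x = (x,0,0,…)` for `x ∈ [0,1]`. -/
noncomputable def deltaConfig (x : ℝ) (h0 : 0 ≤ x) (h1 : x ≤ 1) : MacroConfig where
  a i := if i = 0 then x else 0
  antitone := by
    intro i j hij
    by_cases hj : j = 0
    · have hi : i = 0 := Nat.le_antisymm (hj ▸ hij) (Nat.zero_le i)
      simp [hi, hj]
    · by_cases hi : i = 0 <;> simp [hi, hj, h0]
  nonneg i := by by_cases hi : i = 0 <;> simp [hi, h0]
  le_one i := by
    by_cases hi : i = 0
    · simpa [hi] using h1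
    · simp [hi]
  summable' := by
    apply summable_of_ne_finset_zero (s := {0})
    intro i hi
    simp at hi
    simp [hi]
  mass_le := by
    rw [tsum_eq_single 0]
    · simpa using h1
    · intro b hb; simp [hb]

/-- The zero macroscopic configuration `(0,0,…)`. -/
noncomputable def zeroConfig : MacroConfig where
  a _ := 0
  antitone := antitone_const
  nonneg _ := le_refl 0
  le_one _ := zero_le_one
  summable' := summable_zero
  mass_le := by simp

/-- The candidate minimizer `Λ*(c;t)`, `λ*_k(c;t) = k^{k-2} c^k t^{k-1} e^{-ctk}/k!`. -/
noncomputable def lamStar (c t : ℝ) : ℕ+ → ℝ := fun k =>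
  ((k : ℕ) : ℝ) ^ (((k : ℕ) : ℤ) - 2) * c ^ (k : ℕ) * t ^ ((k : ℕ) - 1) *
    Real.exp (-(c * t * ((k : ℕ) : ℝ))) / ((k : ℕ).factorial : ℝ)

/-- the distance `d` on microscopic configurations. -/
noncomputable def dDist (x y : ℕ+ → ℝ) : ℝ :=
  ∑' k : ℕ+, (2 : ℝ) ^ (-((k : ℕ) : ℤ)) * |x k - y k|

/-- the distance `D` on macroscopic configurations (index `i` represents `α_{i+1}`). -/
noncomputable def DDist (x y : ℕ → ℝ) : ℝ :=
  ∑' i : ℕ, (2 : ℝ) ^ (-((i : ℤ) + 1)) * |x i - y i|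

/-- the nonincreasing sequence `ℓ_{⌊·N⌋}` listing `k/N` with multiplicity `ℓ_k`, padded by `0`. -/
noncomputable def sortedSeq (N : ℕ) (ℓ : ℕ → ℕ) : ℕ → ℝ := fun i =>
  (((((Finset.range (N + 1)).sum fun k => Multiset.replicate (ℓ k) k).sort (· ≤ ·)).reverse.getD
      i 0 : ℕ) : ℝ) / N

/-- extended-real logarithm, with `log 0 = -∞`. -/
noncomputable def elog (x : ℝ) : EReal := if x = 0 then ⊥ else ((Real.log x : ℝ) : EReal)



/-! ### Auxiliary analytic lemmas -/

private lemma aux_sinh_le_mul_cosh : ∀ y : ℝ, 0 ≤ y → Real.sinh y ≤ y * Real.cosh y := by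
  have h : MonotoneOn (fun y : ℝ => y * Real.cosh y - Real.sinh y) (Set.Ici 0) := by
    apply monotoneOn_of_deriv_nonneg (convex_Ici 0)
    · fun_prop
    · intro x hx
      exact (((hasDerivAt_id' x).mul (Real.hasDerivAt_cosh x)).sub
        (Real.hasDerivAt_sinh x)).differentiableAt.differentiableWithinAt
    · intro x hx
      rw [interior_Ici] at hx
      have H : HasDerivAt (fun y : ℝ => y * Real.cosh y - Real.sinh y) (x * Real.sinh x) x := by
        have := ((hasDerivAt_id' x).mul (Real.hasDerivAt_cosh x)).sub (Real.hasDerivAt_sinh x)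
        exact this.congr_deriv (by ring)
      rw [H.deriv]
      exact mul_nonneg (le_of_lt hx) (Real.sinh_pos_iff.mpr hx).le
  intro y hy
  have := h (Set.self_mem_Ici) hy hy
  simp at this
  linarith

private lemma aux_sinh_div_mono {a b : ℝ} (ha : 0 < a) (hab : a ≤ b) :
    b * Real.sinh a ≤ a * Real.sinh b := by
  have h : MonotoneOn (fun y : ℝ => Real.sinh y / y) (Set.Icc a b) := by
    apply monotoneOn_of_deriv_nonneg (convex_Icc a b)
    · apply ContinuousOn.div Real.continuous_sinh.continuousOn continuousOn_id
      intro x hx; exact ne_of_gt (lt_of_lt_of_le ha hx.1)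
    · intro x hx
      rw [interior_Icc] at hx
      have hx0 : x ≠ 0 := ne_of_gt (lt_trans ha hx.1)
      exact ((Real.hasDerivAt_sinh x).div (hasDerivAt_id' x)
        hx0).differentiableAt.differentiableWithinAt
    · intro x hx
      rw [interior_Icc] at hx
      have hx0 : (0:ℝ) < x := lt_trans ha hx.1
      have H : deriv (fun y : ℝ => Real.sinh y / y) x = _ :=
        ((Real.hasDerivAt_sinh x).div (hasDerivAt_id' x) (ne_of_gt hx0)).deriv
      rw [H]
      apply div_nonneg _ (by positivity)
      have := aux_sinh_le_mul_cosh x hx0.le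
      nlinarith [Real.sinh_pos_iff.mpr hx0]
  have key : Real.sinh a / a ≤ Real.sinh b / b :=
    h (Set.left_mem_Icc.mpr hab) (Set.right_mem_Icc.mpr hab) hab
  rw [div_le_div_iff₀ ha (lt_of_lt_of_le ha hab)] at key
  linarith

lemma maTerm_zero (t : ℝ) : maTerm t 0 = 0 := by simp [maTerm]

private lemma aux_one_sub_exp_neg (u : ℝ) :
    1 - Real.exp (-u) = 2 * Real.exp (-(u/2)) * Real.sinh (u/2) := by
  have h : Real.exp u = Real.exp (u/2) * Real.exp (u/2) := by
    rw [← Real.exp_add]; ring_nf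
  rw [Real.sinh_eq, Real.exp_neg, Real.exp_neg, h]
  have := Real.exp_pos (u/2)
  field_simp

lemma maTerm_eq {t x : ℝ} (ht : 0 < t) (hx : 0 < x) :
    maTerm t x = x * Real.log (t*x/(2*Real.sinh (t*x/2))) - x * Real.log t + t/2*x := by
  have hs : 0 < Real.sinh (t*x/2) := Real.sinh_pos_iff.mpr (by positivity)
  have hD : 1 - Real.exp (-(t*x)) = 2 * Real.exp (-(t*x/2)) * Real.sinh (t*x/2) :=
    aux_one_sub_exp_neg (t*x)
  have hlog : Real.log (x / (1 - Real.exp (-(t*x)))) =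
      Real.log (t*x/(2*Real.sinh (t*x/2))) - Real.log t + t*x/2 := by
    rw [hD, Real.log_div hx.ne' (by positivity),
      Real.log_mul (by positivity) hs.ne',
      Real.log_mul two_ne_zero (Real.exp_ne_zero _), Real.log_exp,
      Real.log_div (by positivity) (by positivity),
      Real.log_mul ht.ne' hx.ne', Real.log_mul two_ne_zero hs.ne']
    ring
  unfold maTerm
  rw [hlog]; ring

lemma maTerm_lower {t x B : ℝ} (ht : 0 < t) (hx : 0 ≤ x) (hxB : x ≤ B) (hB : 0 < B) :
    x * (t/2 - Real.log t + Real.log (t*B/(2*Real.sinh (t*B/2)))) ≤ maTerm t x := by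
  rcases eq_or_lt_of_le hx with h0 | h0
  · rw [← h0, maTerm_zero]; simp
  · rw [maTerm_eq ht h0]
    have hsa : 0 < Real.sinh (t*x/2) := Real.sinh_pos_iff.mpr (by positivity)
    have hsb : 0 < Real.sinh (t*B/2) := Real.sinh_pos_iff.mpr (by positivity)
    have hratio : t*B/(2*Real.sinh (t*B/2)) ≤ t*x/(2*Real.sinh (t*x/2)) := by
      rw [div_le_div_iff₀ (by positivity) (by positivity)]
      have := aux_sinh_div_mono (a := t*x/2) (b := t*B/2) (by positivity) (by gcongr)
      nlinarith
    have hlog : Real.log (t*B/(2*Real.sinh (t*B/2))) ≤ Real.log (t*x/(2*Real.sinh (t*x/2))) :=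
      Real.log_le_log (by positivity) hratio
    nlinarith [mul_le_mul_of_nonneg_left hlog h0.le]

lemma maTerm_upper {t x : ℝ} (ht : 0 < t) (hx : 0 ≤ x) :
    maTerm t x ≤ x * (t/2 - Real.log t) := by
  rcases eq_or_lt_of_le hx with h0 | h0
  · rw [← h0, maTerm_zero]; simp
  · rw [maTerm_eq ht h0]
    have hu : 0 < t*x/2 := by positivity
    have hs : t*x/2 < Real.sinh (t*x/2) := Real.self_lt_sinh_iff.mpr hu
    have hlog : Real.log (t*x/(2*Real.sinh (t*x/2))) ≤ 0 := by
      apply Real.log_nonpos (by positivity)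
      rw [div_le_one (by positivity)]
      linarith
    nlinarith [mul_le_mul_of_nonneg_left hlog h0.le]

private lemma aux_logB_nonpos {t B : ℝ} (ht : 0 < t) (hB : 0 < B) :
    Real.log (t*B/(2*Real.sinh (t*B/2))) ≤ 0 := by
  have hu : 0 < t*B/2 := by positivity
  have hs : t*B/2 < Real.sinh (t*B/2) := Real.self_lt_sinh_iff.mpr hu
  apply Real.log_nonpos (by positivity)
  rw [div_le_one (by positivity)]
  linarith

/-- Key inequality: for any macroscopic configuration with mass at most `B`,
the macroscopic part of the rate function is at least `maTerm t B`. -/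
lemma key_ineq {t : ℝ} (ht : 0 < t) (α : MacroConfig) {B : ℝ} (hB : 0 ≤ B)
    (hle : cMa α ≤ B) :
    maTerm t B ≤ IMa t α + (B - cMa α) * (t/2 - Real.log t) := by
  have hterm_le : ∀ i, α.a i ≤ cMa α := fun i =>
    Summable.le_tsum α.summable' i (fun j _ => α.nonneg j)
  rcases eq_or_lt_of_le hB with h0 | h0
  · have hcma : cMa α = 0 := le_antisymm (h0 ▸ hle) (cMa_nonneg α)
    have hzero : ∀ i, α.a i = 0 := fun i =>
      le_antisymm ((hterm_le i).trans hcma.le) (α.nonneg i)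
    have hIMa : IMa t α = 0 := by
      unfold IMa
      have : (fun i => maTerm t (α.a i)) = fun _ => (0:ℝ) :=
        funext fun i => by rw [hzero i, maTerm_zero]
      rw [this, tsum_zero]
    rw [hIMa, hcma, ← h0, maTerm_zero]
    simp
  · set L := Real.log (t*B/(2*Real.sinh (t*B/2))) with hLdef
    have hxB : ∀ i, α.a i ≤ B := fun i => (hterm_le i).trans hle
    have hlow : ∀ i, α.a i * (t/2 - Real.log t + L) ≤ maTerm t (α.a i) :=
      fun i => maTerm_lower ht (α.nonneg i) (hxB i) h0
    have hhigh : ∀ i, maTerm t (α.a i) ≤ α.a i * (t/2 - Real.log t) :=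
      fun i => maTerm_upper ht (α.nonneg i)
    have hsl : Summable (fun i => α.a i * (t/2 - Real.log t + L)) := α.summable'.mul_right _
    have hsf : Summable (fun i => maTerm t (α.a i)) := by
      have h1 : Summable (fun i => maTerm t (α.a i) - α.a i * (t/2 - Real.log t + L)) := by
        apply Summable.of_nonneg_of_le (fun i => by linarith [hlow i])
          (fun i => ?_) (α.summable'.mul_right (-L))
        have := hhigh i
        nlinarith [α.nonneg i]
      have := h1.add hsl
      simpa using this
    have hts : (∑' i, α.a i * (t/2 - Real.log t + L)) ≤ IMa t α := Summable.tsum_le_tsum hlow hsl hsf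
    rw [tsum_mul_right] at hts
    have hcs : (∑' i, α.a i) = cMa α := rfl
    rw [hcs] at hts
    have hQ : maTerm t B = B * (t/2 - Real.log t + L) := by rw [maTerm_eq ht h0]; ring
    have hL0 : L ≤ 0 := aux_logB_nonpos ht h0
    have hprod : (B - cMa α) * L ≤ 0 :=
      mul_nonpos_of_nonneg_of_nonpos (sub_nonneg.mpr hle) hL0
    nlinarith [hts, hprod]

lemma cMa_delta (x : ℝ) (h0 : 0 ≤ x) (h1 : x ≤ 1) : cMa (deltaConfig x h0 h1) = x := by
  unfold cMa
  rw [tsum_eq_single 0]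
  · simp [deltaConfig]
  · intro b hb; simp [deltaConfig, hb]

lemma IMa_delta (t x : ℝ) (h0 : 0 ≤ x) (h1 : x ≤ 1) :
    IMa t (deltaConfig x h0 h1) = maTerm t x := by
  unfold IMa
  rw [tsum_eq_single 0]
  · simp [deltaConfig]
  · intro b hb
    have : (deltaConfig x h0 h1).a b = 0 := by simp [deltaConfig, hb]
    rw [this, maTerm_zero]

/-- Lemma 4.1: for fixed `Λ`, the infimum of `I(Λ,·;t)` over macroscopic configurations is
attained at `δ_{1-c_Λ}`, and equals
`I_Mi(Λ;t) + (1-c_Λ) log((1-c_Λ)/(1-e^{-t(1-c_Λ)})) + (t/2)(1-c_Λ)c_Λ`. -/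
theorem inf_Irate_over_macro (t : ℝ) (ht : 0 < t) (Λ : MicroConfig) :
    (⨅ α : MacroConfig, Irate t Λ α) =
      Irate t Λ (deltaConfig (1 - cMi Λ) (by linarith [cMi_le_one Λ]) (by linarith [cMi_nonneg Λ])) ∧
    Irate t Λ (deltaConfig (1 - cMi Λ) (by linarith [cMi_le_one Λ]) (by linarith [cMi_nonneg Λ])) =
      IMi t Λ +
        (((1 - cMi Λ) * Real.log ((1 - cMi Λ) / (1 - Real.exp (-(t * (1 - cMi Λ))))) +
            t / 2 * (1 - cMi Λ) * cMi Λ : ℝ) : EReal) := by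
  have hc0 := cMi_nonneg Λ
  have hc1 := cMi_le_one Λ
  have hcma : cMa (deltaConfig (1 - cMi Λ) (by linarith [cMi_le_one Λ])
      (by linarith [cMi_nonneg Λ])) = 1 - cMi Λ := cMa_delta _ _ _
  have hima : IMa t (deltaConfig (1 - cMi Λ) (by linarith [cMi_le_one Λ])
      (by linarith [cMi_nonneg Λ])) = maTerm t (1 - cMi Λ) := IMa_delta _ _ _ _
  have hcond : cMi Λ + cMa (deltaConfig (1 - cMi Λ) (by linarith [cMi_le_one Λ])
      (by linarith [cMi_nonneg Λ])) ≤ 1 := by rw [hcma]; linarith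
  constructor
  · apply le_antisymm
    · exact iInf_le _ _
    · apply le_iInf; intro α
      unfold Irate
      by_cases hα : cMi Λ + cMa α ≤ 1
      · rw [if_pos hα, if_pos hcond]
        apply add_le_add_right
        rw [EReal.coe_le_coe_iff]
        rw [hima, hcma]
        have hcma0 := cMa_nonneg α
        have hk := key_ineq (t := t) ht α (B := 1 - cMi Λ) (by linarith) (by linarith)
        have h1B : (1 : ℝ) - cMi Λ - (1 - cMi Λ) = 0 := by ring
        rw [h1B]
        have : (1 : ℝ) - cMi Λ - cMa α = (1 - cMi Λ) - cMa α := by ring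
        rw [this]
        linarith
      · rw [if_neg hα]; exact le_top
  · unfold Irate
    rw [if_pos hcond, hima, hcma]
    congr 1
    norm_cast
    have h1B : (1 : ℝ) - cMi Λ - (1 - cMi Λ) = 0 := by ring
    rw [h1B, maTerm]
    ring

end ERGraph
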